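/- Let M be a 3×3 matrix of linear forms over k with det M = c·F, c ≠ 0, and let M̃ = adj(M) be its classical adjugate. Then every entry of M̃ is a homogeneous polynomial of degree 2 in z0,z1,z2,z3, and at every smooth point P of the surface {F = 0} the matrix M̃(P) has rank exactly 1. -/

import Mathlib

/-!
Over a field, a singular matrix `A` with `adj A ≠ 0` has rank `n - 1`: a nonzero entry of
`adj A` is the determinant of `A` with one row replaced, and replacing a row raises the rank by at
most one. Since `A * adj A = det A • 1 = 0`, the adjugate then has rank at most one. At a smooth
point `P` of `F = 0` we have `det M(P) = c F(P) = 0`, and `adj M(P) ≠ 0` because Jacobi's formula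
`∂ₜ det M = tr (adj M * ∂ₜ M)` expresses the nonzero `c ∂ₜF(P)` through the entries of
`adj M(P)`.
-/

open MvPolynomial Matrix Finset

namespace Derivation

theorem map_prod_eq_sum_prod_update {R A ι : Type*} [CommSemiring R] [CommSemiring A]
    [Algebra R A] [DecidableEq ι] (D : Derivation R A A) (s : Finset ι) (f : ι → A) :
    D (∏ i ∈ s, f i) = ∑ i ∈ s, ∏ j ∈ s, Function.update f i (D (f i)) j := by
  induction s using Finset.induction_on with
  | empty => simp
  | insert a s ha ih =>
    have hupd_a : ∏ j ∈ s, Function.update f a (D (f a)) j = ∏ j ∈ s, f j :=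
      prod_congr rfl fun j hj => Function.update_of_ne (ne_of_mem_of_not_mem hj ha) _ _
    have hupd_s : ∀ i ∈ s, Function.update f i (D (f i)) a = f a := fun i hi =>
      Function.update_of_ne (ne_of_mem_of_not_mem hi ha).symm _ _
    have hrest : ∑ i ∈ s, ∏ j ∈ insert a s, Function.update f i (D (f i)) j =
        f a * ∑ i ∈ s, ∏ j ∈ s, Function.update f i (D (f i)) j := by
      rw [mul_sum]
      exact sum_congr rfl fun i hi => by rw [prod_insert ha, hupd_s i hi]
    rw [prod_insert ha, leibniz, ih, sum_insert ha, prod_insert ha, hupd_a,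
      Function.update_self, hrest, smul_eq_mul, smul_eq_mul, add_comm, mul_comm]

theorem map_det {R A n : Type*} [CommSemiring R] [CommRing A] [Algebra R A]
    [Fintype n] [DecidableEq n] (D : Derivation R A A) (M : Matrix n n A) :
    D M.det = (M.adjugate * M.map D).trace := by
  have hcol : D M.det = ∑ r, (M.updateCol r fun a => D (M a r)).det := by
    simp only [det_apply, map_sum, Units.smul_def, map_zsmul, D.map_prod_eq_sum_prod_update]
    rw [sum_comm]
    refine sum_congr rfl fun σ _ => ?_
    rw [smul_sum]
    refine sum_congr rfl fun r _ => congrArg _ (prod_congr rfl fun i _ => ?_)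
    by_cases h : i = r
    · subst h; simp
    · simp [h]
  simp only [hcol, ← cramer_apply, cramer_eq_adjugate_mulVec, trace, Matrix.diag, mul_apply,
    mulVec, dotProduct, map_apply]

end Derivation

namespace MvPolynomial

variable {σ R n : Type*} [CommRing R]

theorem IsHomogeneous.det [Fintype n] [DecidableEq n] {M : Matrix n n (MvPolynomial σ R)}
    {d : ℕ} (hM : ∀ i j, (M i j).IsHomogeneous d) :
    M.det.IsHomogeneous (Fintype.card n * d) := by
  rw [det_apply']
  refine IsHomogeneous.sum _ _ _ fun τ _ => ?_
  convert (isHomogeneous_C σ ((Equiv.Perm.sign τ : ℤ) : R)).mul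
    (IsHomogeneous.prod _ _ _ fun i _ => hM (τ i) i)
  · simp
  · rw [sum_const, smul_eq_mul, zero_add, card_univ]

theorem IsHomogeneous.adjugate {m : ℕ}
    {M : Matrix (Fin (m + 1)) (Fin (m + 1)) (MvPolynomial σ R)} {d : ℕ}
    (hM : ∀ i j, (M i j).IsHomogeneous d) (i j : Fin (m + 1)) :
    (M.adjugate i j).IsHomogeneous (m * d) := by
  rw [adjugate_fin_succ_eq_det_submatrix]
  have hminor := IsHomogeneous.det (M := M.submatrix j.succAbove i.succAbove) fun _ _ => hM _ _
  rw [Fintype.card_fin] at hminor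
  rcases neg_one_pow_eq_or (MvPolynomial σ R) (j + i : ℕ) with h | h <;>
    simp [h, hminor, hminor.neg]

end MvPolynomial

namespace Matrix

variable {K n : Type*} [Field K] [Fintype n]

theorem rank_updateRow_le [DecidableEq n] (A : Matrix n n K) (j : n) (v : n → K) :
    (A.updateRow j v).rank ≤ A.rank + 1 := by
  have hrows : Set.range (A.updateRow j v) ⊆ insert v (Set.range A) := by
    rintro _ ⟨r, rfl⟩
    by_cases h : r = j
    · subst h; simp
    · rw [updateRow_ne h]; exact Set.mem_insert_of_mem _ ⟨r, rfl⟩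
  rw [rank_eq_finrank_span_row, rank_eq_finrank_span_row]
  calc Module.finrank K (Submodule.span K (Set.range (A.updateRow j v)))
      ≤ Module.finrank K (Submodule.span K (insert v (Set.range A))) :=
        Submodule.finrank_mono (Submodule.span_mono hrows)
    _ ≤ Module.finrank K (K ∙ v) + Module.finrank K (Submodule.span K (Set.range A)) := by
        rw [Submodule.span_insert]; exact Submodule.finrank_add_le_finrank_add_finrank _ _
    _ ≤ Module.finrank K (Submodule.span K (Set.range A)) + 1 := by
        rw [add_comm]; gcongr; simpa using finrank_span_le_card ({v} : Set (n → K))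

theorem card_le_rank_add_one_of_adjugate_ne_zero [DecidableEq n] {A : Matrix n n K}
    (h : A.adjugate ≠ 0) :
    Fintype.card n ≤ A.rank + 1 := by
  obtain ⟨i, j, hij⟩ : ∃ i j, A.adjugate i j ≠ 0 := by
    by_contra! h0
    exact h (ext h0)
  rw [adjugate_apply] at hij
  have hunit : IsUnit (A.updateRow j (Pi.single i 1)) :=
    (isUnit_iff_isUnit_det _).mpr hij.isUnit
  simpa [rank_of_isUnit _ hunit] using rank_updateRow_le A j (Pi.single i 1)

theorem one_le_rank_of_ne_zero {m : Type*} [Fintype m] {A : Matrix m n K} (h : A ≠ 0) :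
    1 ≤ A.rank := by
  classical
  rw [Nat.one_le_iff_ne_zero, Ne, rank, Submodule.finrank_eq_zero, LinearMap.range_eq_bot,
    ← toLin'_apply', LinearEquiv.map_eq_zero_iff]
  exact h

theorem rank_adjugate_eq_one [DecidableEq n] {A : Matrix n n K} (hdet : A.det = 0)
    (h : A.adjugate ≠ 0) :
    A.adjugate.rank = 1 := by
  have hmul : A * A.adjugate = 0 := by rw [mul_adjugate, hdet, zero_smul]
  have hsum := rank_add_rank_le_card_of_mul_eq_zero hmul
  have hA := card_le_rank_add_one_of_adjugate_ne_zero h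
  have hadj := one_le_rank_of_ne_zero h
  omega

end Matrix

theorem stmt1_general {k : Type*} [Field k]
    (F : MvPolynomial (Fin 4) k)
    (M : Matrix (Fin 3) (Fin 3) (MvPolynomial (Fin 4) k))
    (hM : ∀ i j, (M i j).IsHomogeneous 1)
    (c : k) (hc : c ≠ 0) (hdet : M.det = C c * F) :
    (∀ i j, (M.adjugate i j).IsHomogeneous 2) ∧
    (∀ P : Fin 4 → k, eval P F = 0 → (∃ i, eval P (pderiv i F) ≠ 0) →
      ((M.adjugate).map (eval P)).rank = 1) := by
  refine ⟨fun i j => IsHomogeneous.adjugate hM i j, ?_⟩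
  rintro P hP ⟨t, ht⟩
  have hadj : M.adjugate.map (eval P) = (M.map (eval P)).adjugate := by
    simpa only [RingHom.mapMatrix_apply] using (eval P).map_adjugate M
  have hdetA : (M.map (eval P)).det = 0 := by
    rw [← RingHom.mapMatrix_apply, ← RingHom.map_det, hdet, map_mul, eval_C, hP, mul_zero]
  rw [hadj]
  refine rank_adjugate_eq_one hdetA fun h0 => mul_ne_zero hc ht ?_
  calc c * eval P (pderiv t F) = eval P (pderiv t M.det) := by
        rw [hdet, pderiv_C_mul, map_mul, eval_C]
    _ = ((M.adjugate * M.map (pderiv t)).map (eval P)).trace := by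
        rw [Derivation.map_det, ← AddMonoidHom.map_trace]
    _ = 0 := by rw [Matrix.map_mul, hadj, h0, zero_mul, trace_zero]

/-- For a determinantal representation `M` of a cubic surface `F = 0`, every entry of the
adjugate `adj M` is homogeneous of degree 2, and at every smooth point of the surface the
evaluated adjugate has rank exactly 1. -/
theorem stmt1 {k : Type*} [Field k] [IsAlgClosed k]
    (F : MvPolynomial (Fin 4) k) (hF : F.IsHomogeneous 3)
    (M : Matrix (Fin 3) (Fin 3) (MvPolynomial (Fin 4) k))
    (hM : ∀ i j, (M i j).IsHomogeneous 1)
    (c : k) (hc : c ≠ 0) (hdet : M.det = C c * F) :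
    (∀ i j, (M.adjugate i j).IsHomogeneous 2) ∧
    (∀ P : Fin 4 → k, eval P F = 0 → (∃ i, eval P (pderiv i F) ≠ 0) →
      ((M.adjugate).map (eval P)).rank = 1) :=
  stmt1_general F M hM c hc hdet
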